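/- Let X be a finite set with |X| ≥ 2. There exist strictly positive probability distributions G, B on X and α ∈ (0,1] such that the function P ↦ D_{χ²}(P‖G) − α·D_{χ²}(P‖B) is not convex on the probability simplex, where D_{χ²}(P‖Q) = Σ_x Q(x)·((P(x)/Q(x)) − 1)² is the χ² divergence. -/

import Mathlib

/-!
For `α = 1` the linear terms of the two χ² divergences cancel, so up to a constant the objective is
the diagonal quadratic form `∑ x, c x * P x ^ 2` with `c x = 1 / G x - 1 / B x`. At the midpoint of
the edge joining the vertices `a` and `b` of the simplex this form equals `(c a + c b) / 4`, half
the average of its values at the endpoints, so convexity forces `c a + c b ≥ 0`. With `G` uniform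
and `B a = 1 / (4n)` one has `c a = n - 4n` and `c b < n`.
-/

open Finset

lemma mul_div_sub_one_sq_sub {g b : ℝ} (hg : g ≠ 0) (hb : b ≠ 0) (p : ℝ) :
    g * (p / g - 1) ^ 2 - b * (p / b - 1) ^ 2 = (1 / g - 1 / b) * p ^ 2 + (g - b) := by
  field_simp
  ring

lemma chiSq_sub_chiSq_eq {X : Type*} [Fintype X] {G B : X → ℝ} (hG : ∀ x, G x ≠ 0)
    (hB : ∀ x, B x ≠ 0) (P : X → ℝ) :
    (∑ x, G x * (P x / G x - 1) ^ 2) - 1 * ∑ x, B x * (P x / B x - 1) ^ 2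
      = ∑ x, (1 / G x - 1 / B x) * P x ^ 2 + (∑ x, G x - ∑ x, B x) := by
  simp only [one_mul, ← sum_sub_distrib, mul_div_sub_one_sq_sub (hG _) (hB _), sum_add_distrib]

lemma add_nonneg_of_convexOn_sum_mul_sq {X : Type*} [Fintype X] [DecidableEq X] {s : Set (X → ℝ)}
    {c : X → ℝ} {k : ℝ} (hconv : ConvexOn ℝ s fun P => ∑ x, c x * P x ^ 2 + k) {a b : X}
    (hab : a ≠ b) (ha : Pi.single a 1 ∈ s) (hb : Pi.single b 1 ∈ s) : 0 ≤ c a + c b := by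
  have hmid := hconv.2 ha hb (by norm_num : (0 : ℝ) ≤ 1 / 2) (by norm_num : (0 : ℝ) ≤ 1 / 2)
    (by norm_num)
  have hsupp {P : X → ℝ} {x : X} (hP : P x = 0) : c x * P x ^ 2 = 0 := by simp [hP]
  simp only [smul_eq_mul] at hmid
  rw [Fintype.sum_eq_add a b hab fun x hx => hsupp (by simp [hx.1, hx.2]),
    Fintype.sum_eq_add a b hab fun x hx => hsupp (by simp [hx.1]),
    Fintype.sum_eq_add a b hab fun x hx => hsupp (by simp [hx.2])] at hmid
  simp only [Pi.add_apply, Pi.smul_apply, smul_eq_mul, Pi.single_eq_same,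
    Pi.single_eq_of_ne hab, Pi.single_eq_of_ne hab.symm] at hmid
  linarith

/-- For the χ² divergence, the difference-of-divergences objective need not be
convex on the simplex even for some `α ∈ (0,1]`. -/
theorem stmt14 {X : Type*} [Fintype X] (hX : 2 ≤ Fintype.card X) :
    ∃ (G B : X → ℝ) (α : ℝ),
      (∀ x, 0 < G x) ∧ (∀ x, 0 < B x)
      ∧ (∑ x, G x = 1) ∧ (∑ x, B x = 1)
      ∧ 0 < α ∧ α ≤ 1
      ∧ ¬ ConvexOn ℝ {P : X → ℝ | (∀ x, 0 ≤ P x) ∧ ∑ x, P x = 1}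
          (fun P => (∑ x, G x * (P x / G x - 1) ^ 2)
            - α * ∑ x, B x * (P x / B x - 1) ^ 2) := by
  classical
  obtain ⟨a, b, hab⟩ := Fintype.exists_pair_of_one_lt_card hX
  set n : ℝ := (Fintype.card X : ℝ) with hn_def
  have hn : 0 < n := by positivity
  set G : X → ℝ := fun _ => 1 / n
  set B : X → ℝ := fun x => 1 / (4 * n) + if x = b then 3 / 4 else 0
  have hGpos : ∀ x, 0 < G x := fun x => by positivity
  have hBpos : ∀ x, 0 < B x := fun x => by positivity
  have hGsum : ∑ x, G x = 1 := by
    simp only [G, sum_const, card_univ, nsmul_eq_mul, ← hn_def]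
    field_simp
  have hBsum : ∑ x, B x = 1 := by
    simp only [B, sum_add_distrib, sum_const, card_univ, nsmul_eq_mul, ← hn_def, sum_ite_eq',
      mem_univ, if_true]
    field_simp
    ring
  refine ⟨G, B, 1, hGpos, hBpos, hGsum, hBsum, one_pos, le_rfl, fun hconv => ?_⟩
  simp_rw [chiSq_sub_chiSq_eq (fun x => (hGpos x).ne') (fun x => (hBpos x).ne')] at hconv
  have hcoeff := add_nonneg_of_convexOn_sum_mul_sq hconv hab
    (single_mem_stdSimplex ℝ a) (single_mem_stdSimplex ℝ b)
  have hBb : 0 < 1 / B b := one_div_pos.2 (hBpos b)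
  simp only [G, B, if_neg hab, add_zero, one_div_one_div] at hcoeff hBb
  linarith
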